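/- Let φ : F_p((t)) → Aut(F_p((t))^d) be a continuous group homomorphism (Aut with the Braconnier topology) satisfying φ(t·f) = τ ∘ φ(f) ∘ τ^{-1} for all f ∈ F_p((t)), where τ is coordinatewise multiplication by t. Then there exists a compact open subgroup V ≤ F_p((t))^d such that φ(f)(V) = V for every f ∈ F_p[[t]] and τ(V) ⊆ V. -/

import Mathlib

/-!
Take `U = F_p[[t]]^d` and let `V` be the set of `z` with `φ(f)(τ^j z) ∈ U` for all `j ≥ 0` and
`f ∈ F_p[[t]]`. Since `τ^j ∘ φ(f) = φ(t^j f) ∘ τ^j` and `t F_p[[t]] ⊆ F_p[[t]]`, the subgroup `V` is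
stable under `τ` and under `φ(F_p[[t]])`, and `V ⊆ U` (take `j = 0`, `f = 0`). By compactness of
`F_p[[t]]` and joint continuity there is a neighbourhood `N` of `0` with `φ(F_p[[t]]) N ⊆ U`; `N`
contains a `τ`-stable neighbourhood `∏ t^{m_i} F_p[[t]]`, which therefore lies in `V`. So `V` is
open, hence closed, hence compact inside the compact group `U`.
-/

/-- Coordinatewise multiplication by `t^j` (`j ∈ ℤ`) on `F_p((t))^d`, i.e. `τ^j`. -/
noncomputable def tauZ (p d : ℕ) (j : ℤ) (z : Fin d → LaurentSeries (ZMod p)) :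
    Fin d → LaurentSeries (ZMod p) :=
  fun r => HahnSeries.single j (1 : ZMod p) * z r

/-- The subring `F_p[[t]]` of `F_p((t))`: Laurent series without negative terms. -/
def intLS (p : ℕ) : Set (LaurentSeries (ZMod p)) :=
  {f | ∀ i : ℤ, i < 0 → f.coeff i = 0}

open Filter Topology

section InvariantCore

variable {A M : Type*} [AddGroup A] [AddGroup M]
  (φ : A → M ≃+ M) (T : M →+ M) (S : AddSubgroup A) (U : AddSubgroup M)

/-- Once `T ∘ φ f = φ (σ f) ∘ T` with `σ S ⊆ S`, this is the largest subgroup of `U` stable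
under `T` and under every `φ f`, `f ∈ S`. -/
def invariantCore : AddSubgroup M where
  carrier := {z | ∀ j : ℕ, ∀ f ∈ S, φ f (T^[j] z) ∈ U}
  zero_mem' j f _ := by simpa only [iterate_map_zero, map_zero] using U.zero_mem
  add_mem' ha hb j f hf := by
    simpa only [iterate_map_add, map_add] using U.add_mem (ha j f hf) (hb j f hf)
  neg_mem' ha j f hf := by simpa only [iterate_map_neg, map_neg] using U.neg_mem (ha j f hf)

variable {φ T S U}

theorem mapsTo_invariantCore :
    Set.MapsTo T (invariantCore φ T S U) (invariantCore φ T S U) := fun _ hz j f hf => by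
  simpa only [← Function.iterate_succ_apply] using hz (j + 1) f hf

section Action

variable (hφ : ∀ f g z, φ (f + g) z = φ f (φ g z))
include hφ

theorem apply_zero_of_apply_add (z : M) : φ 0 z = z :=
  (φ 0).injective (by rw [← hφ, add_zero])

theorem invariantCore_le : invariantCore φ T S U ≤ U := fun z hz => by
  simpa only [Function.iterate_zero_apply, apply_zero_of_apply_add hφ] using hz 0 0 S.zero_mem

variable {σ : A → A} (hσ : ∀ f z, φ (σ f) (T z) = T (φ f z)) (hσS : ∀ f ∈ S, σ f ∈ S)
include hσ hσS

theorem apply_mem_invariantCore {f : A} (hf : f ∈ S) {z : M} (hz : z ∈ invariantCore φ T S U) :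
    φ f z ∈ invariantCore φ T S U := by
  intro j g hg
  have hcomm : T^[j] (φ f z) = φ (σ^[j] f) (T^[j] z) := by
    induction j with
    | zero => rfl
    | succ j ih => rw [Function.iterate_succ_apply', Function.iterate_succ_apply', ih,
        Function.iterate_succ_apply', hσ]
  rw [hcomm, ← hφ]
  exact hz j _ (S.add_mem hg (Set.MapsTo.iterate hσS j hf))

theorem image_invariantCore {f : A} (hf : f ∈ S) :
    φ f '' invariantCore φ T S U = invariantCore φ T S U := by
  refine (Set.image_subset_iff.2 fun z hz => apply_mem_invariantCore hφ hσ hσS hf hz).antisymm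
    fun z hz => ⟨φ (-f) z, apply_mem_invariantCore hφ hσ hσS (S.neg_mem hf) hz, ?_⟩
  change φ f (φ (-f) z) = z
  rw [← hφ, add_neg_cancel, apply_zero_of_apply_add hφ]

end Action

theorem isOpen_invariantCore [TopologicalSpace A] [TopologicalSpace M] [ContinuousAdd M]
    (hS : IsCompact (S : Set A)) (hφc : Continuous fun x : A × M => φ x.1 x.2)
    (hU : IsOpen (U : Set M)) (hT : ∀ N ∈ 𝓝 (0 : M), ∀ᶠ z in 𝓝 0, ∀ j : ℕ, T^[j] z ∈ N) :
    IsOpen (invariantCore φ T S U : Set M) := by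
  have hN : ∀ᶠ z in 𝓝 (0 : M), ∀ f ∈ S, φ f z ∈ U :=
    hS.eventually_forall_of_forall_eventually fun f _ =>
      (hφc.comp continuous_swap).continuousAt.preimage_mem_nhds
        (hU.mem_nhds (by simp))
  exact AddSubgroup.isOpen_of_mem_nhds _ ((hT _ hN).mono fun z hz j f hf => hz j f hf)

end InvariantCore

open HahnSeries
open scoped WithZero

namespace LaurentSeries

variable (K : Type*) [Field K]

/-- The subgroup `X ^ m K⟦X⟧`. -/
def vanishBelow (m : ℤ) : AddSubgroup K⸨X⸩ where
  carrier := {f | ∀ i < m, f.coeff i = 0}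
  zero_mem' _ _ := rfl
  add_mem' ha hb i hi := by rw [coeff_add, ha i hi, hb i hi, add_zero]
  neg_mem' ha i hi := by rw [coeff_neg, ha i hi, neg_zero]

variable {K}

theorem mem_vanishBelow_iff_valuation_le {m : ℤ} {f : K⸨X⸩} :
    f ∈ vanishBelow K m ↔ Valued.v f ≤ WithZero.exp (-m) :=
  (valuation_le_iff_coeff_lt_eq_zero K).symm

theorem single_mul_mem_vanishBelow {m j : ℤ} (hj : 0 ≤ j) (a : K) {f : K⸨X⸩}
    (hf : f ∈ vanishBelow K m) : single j a * f ∈ vanishBelow K m := fun i hi => by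
  rw [coeff_single_mul, hf (i - j) (by omega), mul_zero]

theorem hasBasis_nhds_zero_vanishBelow :
    (𝓝 (0 : K⸨X⸩)).HasBasis (fun _ => True) fun m : ℤ => (vanishBelow K m : Set K⸨X⸩) := by
  refine (Valued.hasBasis_nhds_zero K⸨X⸩ ℤᵐ⁰).to_hasBasis (fun γ _ => ?_) fun m _ => ?_
  · set D := WithZero.log (MonoidWithZeroHom.ValueGroup₀.embedding γ.1) - 1
    have hD : WithZero.exp D < MonoidWithZeroHom.ValueGroup₀.embedding γ.1 := by
      rw [← WithZero.lt_log_iff_exp_lt (by simp)]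
      omega
    refine ⟨-D, trivial, fun f hf => ?_⟩
    rw [SetLike.mem_coe, mem_vanishBelow_iff_valuation_le, neg_neg] at hf
    exact (Valuation.restrict_lt_iff_lt_embedding _).2 (hf.trans_lt hD)
  · have hs : Valued.v (single m (1 : K) : K⸨X⸩) = WithZero.exp (-m) := by
      simpa using valuation_single_zpow K m
    refine ⟨Units.mk0 (Valued.v.restrict (single m (1 : K) : K⸨X⸩)) (by simp), trivial,
      fun f hf => ?_⟩
    rw [SetLike.mem_coe, mem_vanishBelow_iff_valuation_le, ← hs]
    exact ((Valuation.restrict_lt_iff _).1 hf).le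

theorem isOpen_vanishBelow (m : ℤ) : IsOpen (vanishBelow K m : Set K⸨X⸩) :=
  AddSubgroup.isOpen_of_mem_nhds _ (hasBasis_nhds_zero_vanishBelow.mem_of_mem trivial)

theorem isCompact_vanishBelow [Finite K] (m : ℤ) : IsCompact (vanishBelow K m : Set K⸨X⸩) := by
  refine isCompact_iff_totallyBounded_isComplete.2 ⟨?_,
    (AddSubgroup.isClosed_of_isOpen _ (isOpen_vanishBelow m)).isComplete⟩
  rw [totallyBounded_iff_subset_finite_iUnion_nhds_zero]
  intro N hN
  obtain ⟨n, -, hn⟩ := hasBasis_nhds_zero_vanishBelow.mem_iff.1 hN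
  refine ⟨truncLT n '' vanishBelow K m, ?_,
    fun f hf => Set.mem_biUnion (Set.mem_image_of_mem _ hf) ?_⟩
  · -- a truncation of an element of `vanishBelow K m` is determined by its coefficients in `[m, n)`
    refine Set.Finite.of_injOn (f := fun g : K⸨X⸩ => fun i : Finset.Ico m n => g.coeff i)
      (Set.mapsTo_univ _ _) ?_ Set.finite_univ
    rintro _ ⟨g, hg, rfl⟩ _ ⟨h, hh, rfl⟩ hgh
    ext i
    simp only [HahnSeries.coeff_truncLT]
    split_ifs with hin
    · by_cases him : i < m
      · rw [hg i him, hh i him]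
      · simpa [HahnSeries.coeff_truncLT, hin] using
          congr_fun hgh ⟨i, Finset.mem_Ico.2 ⟨not_lt.1 him, hin⟩⟩
    · rfl
  · rw [Set.mem_vadd_set_iff_neg_vadd_mem, vadd_eq_add]
    refine hn fun i hi => ?_
    simp [HahnSeries.coeff_truncLT, hi]

theorem eventually_forall_iterate_single_mul_mem {ι : Type*} {k : ℤ} (hk : 0 ≤ k) (a : K)
    {N : Set (ι → K⸨X⸩)} (hN : N ∈ 𝓝 0) :
    ∀ᶠ z in 𝓝 0, ∀ j : ℕ, (fun (z : ι → K⸨X⸩) i => single k a * z i)^[j] z ∈ N := by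
  rw [nhds_pi] at hN
  obtain ⟨⟨I, m⟩, ⟨hI, -⟩, hsub⟩ :=
    (Filter.hasBasis_pi fun _ => hasBasis_nhds_zero_vanishBelow (K := K)).mem_iff.1 hN
  have hmaps : Set.MapsTo (fun (z : ι → K⸨X⸩) i => single k a * z i)
      (I.pi fun i => vanishBelow K (m i)) (I.pi fun i => vanishBelow K (m i)) :=
    fun z hz i hi => single_mul_mem_vanishBelow hk a (hz i hi)
  filter_upwards [set_pi_mem_nhds hI fun i _ => hasBasis_nhds_zero_vanishBelow.mem_of_mem trivial]
    with z hz j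
  exact hsub (hmaps.iterate j hz)

end LaurentSeries

theorem tauZ_neg_tauZ (p d : ℕ) (j : ℤ) (z : Fin d → LaurentSeries (ZMod p)) :
    tauZ p d (-j) (tauZ p d j z) = z := by
  funext r
  simp only [tauZ, ← mul_assoc, single_mul_single, neg_add_cancel, mul_one, single_zero_one,
    one_mul]

theorem invariant_compact_open_subgroup_general (p : ℕ) [Fact p.Prime] (d : ℕ)
    (φ : LaurentSeries (ZMod p) →
      ((Fin d → LaurentSeries (ZMod p)) ≃+ (Fin d → LaurentSeries (ZMod p))))
    (hhom : ∀ f g, φ (f + g) = (φ g).trans (φ f))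
    (hcont : Continuous fun x :
        LaurentSeries (ZMod p) × (Fin d → LaurentSeries (ZMod p)) => φ x.1 x.2)
    (hequiv : ∀ (f : LaurentSeries (ZMod p)) (z : Fin d → LaurentSeries (ZMod p)),
      φ (HahnSeries.single (1 : ℤ) (1 : ZMod p) * f) z =
        tauZ p d 1 (φ f (tauZ p d (-1) z))) :
    ∃ V : AddSubgroup (Fin d → LaurentSeries (ZMod p)),
      IsCompact (V : Set (Fin d → LaurentSeries (ZMod p))) ∧
      IsOpen (V : Set (Fin d → LaurentSeries (ZMod p))) ∧
      (∀ f ∈ intLS p, φ f '' (V : Set (Fin d → LaurentSeries (ZMod p))) = V) ∧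
      (∀ v ∈ V, tauZ p d 1 v ∈ V) := by
  let τ := AddMonoidHom.compLeft (AddMonoidHom.mulLeft (single (1 : ℤ) (1 : ZMod p))) (Fin d)
  let O := LaurentSeries.vanishBelow (ZMod p) 0
  let U := AddSubgroup.pi Set.univ fun _ : Fin d => O
  have hφ : ∀ f g z, φ (f + g) z = φ f (φ g z) := fun f g z => by rw [hhom]; rfl
  have hτ : ∀ f z, φ (single 1 1 * f) (τ z) = τ (φ f z) := fun f z => by
    rw [hequiv]
    exact congrArg (tauZ p d 1 ∘ φ f) (tauZ_neg_tauZ p d 1 z)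
  have hOc : IsCompact (O : Set (LaurentSeries (ZMod p))) :=
    LaurentSeries.isCompact_vanishBelow 0
  have hUo : IsOpen (U : Set (Fin d → LaurentSeries (ZMod p))) := by
    rw [AddSubgroup.coe_pi]
    exact isOpen_set_pi Set.finite_univ fun _ _ => LaurentSeries.isOpen_vanishBelow 0
  have hUc : IsCompact (U : Set (Fin d → LaurentSeries (ZMod p))) := by
    rw [AddSubgroup.coe_pi]
    exact isCompact_univ_pi fun _ => hOc
  have hVo : IsOpen (invariantCore φ τ O U : Set (Fin d → LaurentSeries (ZMod p))) :=
    isOpen_invariantCore hOc hcont hUo fun _ hN =>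
      LaurentSeries.eventually_forall_iterate_single_mul_mem zero_le_one 1 hN
  have hτO : ∀ f ∈ O, single 1 1 * f ∈ O := fun _ =>
    LaurentSeries.single_mul_mem_vanishBelow zero_le_one 1
  refine ⟨invariantCore φ τ O U, hUc.of_isClosed_subset
    (AddSubgroup.isClosed_of_isOpen _ hVo) (invariantCore_le hφ), hVo,
    fun f hf => image_invariantCore hφ hτ hτO hf, fun v hv => mapsTo_invariantCore hv⟩

/-- Let `φ : F_p((t)) → Aut(F_p((t))^d)` be a homomorphism, continuous for the Braconnier
topology (equivalently here: both evaluation maps `(f,z) ↦ φ(f)(z)` and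
`(f,z) ↦ φ(f)⁻¹(z)` are jointly continuous), satisfying `φ(t·f) = τ ∘ φ(f) ∘ τ⁻¹`.
Then there is a compact open subgroup `V ≤ F_p((t))^d` with `φ(f)(V) = V` for all
`f ∈ F_p[[t]]` and `τ(V) ⊆ V`. -/
theorem invariant_compact_open_subgroup (p : ℕ) [Fact p.Prime] (d : ℕ) (hd : 0 < d)
    (φ : LaurentSeries (ZMod p) →
      ((Fin d → LaurentSeries (ZMod p)) ≃+ (Fin d → LaurentSeries (ZMod p))))
    (hhom : ∀ f g, φ (f + g) = (φ g).trans (φ f))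
    (hcont : Continuous fun x :
        LaurentSeries (ZMod p) × (Fin d → LaurentSeries (ZMod p)) => φ x.1 x.2)
    (hcont' : Continuous fun x :
        LaurentSeries (ZMod p) × (Fin d → LaurentSeries (ZMod p)) => (φ x.1).symm x.2)
    (hequiv : ∀ (f : LaurentSeries (ZMod p)) (z : Fin d → LaurentSeries (ZMod p)),
      φ (HahnSeries.single (1 : ℤ) (1 : ZMod p) * f) z =
        tauZ p d 1 (φ f (tauZ p d (-1) z))) :
    ∃ V : AddSubgroup (Fin d → LaurentSeries (ZMod p)),
      IsCompact (V : Set (Fin d → LaurentSeries (ZMod p))) ∧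
      IsOpen (V : Set (Fin d → LaurentSeries (ZMod p))) ∧
      (∀ f ∈ intLS p, φ f '' (V : Set (Fin d → LaurentSeries (ZMod p))) = V) ∧
      (∀ v ∈ V, tauZ p d 1 v ∈ V) :=
  invariant_compact_open_subgroup_general p d φ hhom hcont hequiv
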